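/- Let (R, 𝔪) be a noetherian local ring and let P⁰ → P¹ → P² be a complex of finitely generated projective R-modules with P⁰ → P¹ injective, such that H⁰ of the complex after applying — ⊗_R R/𝔪 vanishes, i.e. ker(P⁰ ⊗ R/𝔪 → P¹ ⊗ R/𝔪) = 0. Then X := coker(P⁰ → P¹) is a projective (equivalently, free) R-module. -/
import Mathlib


/-!
STATEMENT 5: Let (R, 𝔪) be a noetherian local ring and P⁰ → P¹ → P² a complex of
finitely generated projective R-modules with P⁰ → P¹ injective, such that
ker(P⁰ ⊗ R/𝔪 → P¹ ⊗ R/𝔪) = 0.  Then X := coker(P⁰ → P¹) is a projective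
(equivalently free) R-module.
-/

theorem coker_projective_of_injective_mod_maximalIdeal
    (R : Type) [CommRing R] [IsNoetherianRing R] [IsLocalRing R]
    (P0 P1 P2 : Type) [AddCommGroup P0] [Module R P0]
    [AddCommGroup P1] [Module R P1] [AddCommGroup P2] [Module R P2]
    [Module.Finite R P0] [Module.Projective R P0]
    [Module.Finite R P1] [Module.Projective R P1]
    [Module.Finite R P2] [Module.Projective R P2]
    (d0 : P0 →ₗ[R] P1) (d1 : P1 →ₗ[R] P2)
    (hcomplex : d1 ∘ₗ d0 = 0)
    (hinj : Function.Injective d0)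
    (hmod : Function.Injective
      (LinearMap.baseChange (IsLocalRing.ResidueField R) d0)) :
    Module.Projective R (P1 ⧸ LinearMap.range d0) := by
  have : Module.FinitePresentation R P1 := Module.finitePresentation_of_projective R P1
  have hP1free : Module.Free R P1 :=
    Module.free_of_flat_of_isLocalRing (R := R) (P := P1)
  have hfree : Module.Free R (P1 ⧸ LinearMap.range d0) := by
    apply Module.free_of_lTensor_residueField_injective
      (f := d0) (g := (LinearMap.range d0).mkQ)
      (Submodule.mkQ_surjective _) d0.exact_map_mkQ_range
    rw [← LinearMap.baseChange_eq_ltensor]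
    exact hmod
  exact Module.Projective.of_free
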